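/- arXiv:1811.02920 — 3 statements merged into one kernel-verified Lean document; each statement's English description precedes it below -/
import Mathlib

section
/- Let G be a plane graph in which no 4-cycle is adjacent to a 5-cycle. Then every vertex v of G of degree at least 4 is incident to at most d_G(v)−2 faces of length 3. -/
open SimpleGraph

universe u

variable {V : Type u}

/-! ### Basic notions: degree, adjacent cycles, good/bad cycles -/

/-- The degree of a vertex, as the cardinality of its neighbour set. -/
noncomputable def gdeg (G : SimpleGraph V) (v : V) : ℕ := Nat.card (G.neighborSet v)

/-- Two closed walks (cycles) share at least one edge. -/
def ShareEdge {G : SimpleGraph V} {a b : V} (c1 : G.Walk a a) (c2 : G.Walk b b) : Prop :=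
  ∃ e : Sym2 V, e ∈ c1.edges ∧ e ∈ c2.edges

/-- In `G`, no cycle of length `k` is adjacent to (shares an edge with) a cycle of length `l`. -/
def NoAdjCycles (G : SimpleGraph V) (k l : ℕ) : Prop :=
  ∀ (a b : V) (c1 : G.Walk a a) (c2 : G.Walk b b),
    c1.IsCycle → c2.IsCycle → c1.length = k → c2.length = l → ¬ ShareEdge c1 c2

/-- A cycle `C` is bad if some vertex of degree at least 4 outside `C`
has at least four neighbours on `C`. -/
def IsBadCycle (G : SimpleGraph V) {a : V} (C : G.Walk a a) : Prop :=
  ∃ w : V, w ∉ C.support ∧ 4 ≤ gdeg G w ∧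
    4 ≤ Nat.card {u : V | u ∈ C.support ∧ G.Adj w u}

/-- A cycle is good if it is not bad. -/
def IsGoodCycle (G : SimpleGraph V) {a : V} (C : G.Walk a a) : Prop := ¬ IsBadCycle G C

/-! ### Combinatorial plane embeddings via rotation systems -/

/-- Reversal of darts, as a permutation. -/
def dartReversal (G : SimpleGraph V) : Equiv.Perm G.Dart where
  toFun := SimpleGraph.Dart.symm
  invFun := SimpleGraph.Dart.symm
  left_inv d := SimpleGraph.Dart.symm_symm d
  right_inv d := SimpleGraph.Dart.symm_symm d

/-- The face-tracing permutation of a rotation system: follow a dart, turn around,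
and take the next outgoing dart in the rotation. Its orbits are the faces. -/
def facePerm {G : SimpleGraph V} (rot : Equiv.Perm G.Dart) : Equiv.Perm G.Dart :=
  (dartReversal G).trans rot

/-- The setoid identifying elements in the same cycle (orbit) of a permutation. -/
def sameCycleSetoid {α : Type*} (f : Equiv.Perm α) : Setoid α :=
  ⟨f.SameCycle, ⟨fun x => Equiv.Perm.SameCycle.refl f x,
    fun h => h.symm, fun h h' => h.trans h'⟩⟩

/-- A (combinatorial) plane embedding of a finite graph `G`: a rotation system
(a permutation of the darts preserving tails and acting with a single cycle on
the darts at each vertex) whose face count satisfies Euler's formula for the plane;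
the faces are the orbits of the face-tracing permutation, and isolated vertices
are accounted for separately. -/
structure PlaneEmbedding [Fintype V] (G : SimpleGraph V) where
  rot : Equiv.Perm G.Dart
  rot_fst : ∀ d : G.Dart, (rot d).fst = d.fst
  rot_cycle : ∀ d d' : G.Dart, d.fst = d'.fst → rot.SameCycle d d'
  euler : (Fintype.card V : ℤ) - (Nat.card G.edgeSet : ℤ)
        + (Nat.card (Quotient (sameCycleSetoid (facePerm rot))) : ℤ)
      = 2 * (Nat.card G.ConnectedComponent : ℤ)
        - (Nat.card {v : V | ∀ w : V, ¬ G.Adj v w} : ℤ)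

/-- A graph is planar if it admits a plane embedding. -/
def IsPlanar [Fintype V] (G : SimpleGraph V) : Prop := Nonempty (PlaneEmbedding G)

namespace PlaneEmbedding

variable [Fintype V] {G : SimpleGraph V} (E : PlaneEmbedding G)

/-- Two darts lie on the same face. -/
def SameFace (d d' : G.Dart) : Prop := (facePerm E.rot).SameCycle d d'

/-- The length of the face containing the dart `d`, i.e. the length of its
boundary closed walk. -/
noncomputable def faceLength (d : G.Dart) : ℕ :=
  Function.minimalPeriod (⇑(facePerm E.rot)) d

/-- The vertex `v` lies on (the boundary of) the face of the dart `d`. -/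
def VertexOnFace (v : V) (d : G.Dart) : Prop := ∃ d' : G.Dart, E.SameFace d d' ∧ d'.fst = v

/-- The faces of the darts `d` and `e` are distinct and share at least one edge. -/
def AdjFaces (d e : G.Dart) : Prop :=
  ¬ E.SameFace d e ∧ ∃ d' : G.Dart, E.SameFace d d' ∧ E.SameFace e d'.symm

/-- The number of faces of length 3 incident with the vertex `v`. -/
noncomputable def numTriFacesAt (v : V) : ℕ :=
  Nat.card {f : Quotient (sameCycleSetoid (facePerm E.rot)) //
    ∃ d : G.Dart, Quotient.mk (sameCycleSetoid (facePerm E.rot)) d = f ∧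
      d.fst = v ∧ E.faceLength d = 3}

/-- `s` is a set of darts representing pairwise distinct 3-faces which are
connected through shared edges: a `T_i`-subgraph with `i = s.card`. -/
def IsTSubgraph (s : Finset G.Dart) : Prop :=
  (∀ d ∈ s, E.faceLength d = 3) ∧
  (∀ d ∈ s, ∀ d' ∈ s, d ≠ d' → ¬ E.SameFace d d') ∧
  (∀ d ∈ s, ∀ d' ∈ s,
    Relation.ReflTransGen (fun x y => x ∈ s ∧ y ∈ s ∧ E.AdjFaces x y) d d')

/-- The vertices of the union of the faces represented by `s`. -/
def TVertices (s : Finset G.Dart) : Set V := {v | ∃ d ∈ s, E.VertexOnFace v d}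

/-- The edges of the union of the faces represented by `s`. -/
def TEdges (s : Finset G.Dart) : Set (Sym2 V) :=
  {e | ∃ d ∈ s, ∃ d' : G.Dart, E.SameFace d d' ∧ d'.edge = e}

/-- The subgraph of `G` formed by the union of the faces represented by `s`. -/
def TGraph (s : Finset G.Dart) : SimpleGraph (E.TVertices s) where
  Adj x y := x ≠ y ∧ s((x : V), (y : V)) ∈ E.TEdges s
  symm := ⟨fun x y h => ⟨h.1.symm, by rw [Sym2.eq_swap]; exact h.2⟩⟩
  loopless := ⟨fun x h => h.1 rfl⟩

/-- The face of the dart `d0` is bounded by the cycle `C`: it has the same length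
as `C` and all its boundary edges are edges of `C`. -/
def FaceBoundedBy (d0 : G.Dart) {a : V} (C : G.Walk a a) : Prop :=
  E.faceLength d0 = C.length ∧ ∀ d' : G.Dart, E.SameFace d0 d' → d'.edge ∈ C.edges

/-- The cycle `C` is separating in the embedding `E`: there are two vertices not on
`C` (witnessed by darts at them) whose faces cannot be connected to each other by
moving along faces and crossing edges not on `C`; equivalently, the interior and the
exterior of `C` both contain a vertex of `G`. -/
def IsSeparating {a : V} (C : G.Walk a a) : Prop :=
  ∃ d e : G.Dart, d.fst ∉ C.support ∧ e.fst ∉ C.support ∧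
    ¬ Relation.ReflTransGen
        (fun x y => E.SameFace x y ∨ (y = x.symm ∧ x.edge ∉ C.edges)) d e

end PlaneEmbedding

/-- The wheel `W_4`: a 4-cycle `1 2 3 4` together with a centre `0` joined to all
four cycle vertices. -/
def wheelW4 : SimpleGraph (Fin 5) :=
  SimpleGraph.fromRel (fun a b =>
    (a, b) ∈ ({(0,1),(0,2),(0,3),(0,4),(1,2),(2,3),(3,4),(4,1)} : Set (Fin 5 × Fin 5)))

/-! ### DP-colouring -/

/-- A matching assignment for the graph `G` and list assignment `L`: for every edge
`uv` a (partial) matching between `{u} × L u` and `{v} × L v`. -/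
structure MatchingAssignment (G : SimpleGraph V) (L : V → Finset ℕ) where
  rel : ∀ ⦃u v : V⦄, G.Adj u v → ℕ → ℕ → Prop
  mem_left : ∀ ⦃u v : V⦄ (h : G.Adj u v) ⦃a b : ℕ⦄, rel h a b → a ∈ L u
  mem_right : ∀ ⦃u v : V⦄ (h : G.Adj u v) ⦃a b : ℕ⦄, rel h a b → b ∈ L v
  symm : ∀ ⦃u v : V⦄ (h : G.Adj u v) (a b : ℕ), rel h a b ↔ rel h.symm b a
  right_unique : ∀ ⦃u v : V⦄ (h : G.Adj u v) ⦃a b b' : ℕ⦄, rel h a b → rel h a b' → b = b'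
  left_unique : ∀ ⦃u v : V⦄ (h : G.Adj u v) ⦃a a' b : ℕ⦄, rel h a b → rel h a' b → a = a'

/-- The cover graph `H_L`: vertices are pairs `(v, c)` with `c ∈ L v`; each set
`{v} × L v` is a clique, and between `{u} × L u` and `{v} × L v` (for `uv ∈ E(G)`)
there are exactly the edges of the matching `M_{uv}`. -/
def Cover {G : SimpleGraph V} {L : V → Finset ℕ} (M : MatchingAssignment G L) :
    SimpleGraph {p : V × ℕ // p.2 ∈ L p.1} where
  Adj x y := x ≠ y ∧
    ((x : V × ℕ).1 = (y : V × ℕ).1 ∨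
      ∃ h : G.Adj (x : V × ℕ).1 (y : V × ℕ).1, M.rel h (x : V × ℕ).2 (y : V × ℕ).2)
  symm := by
    constructor
    rintro x y ⟨hxy, h | ⟨hadj, hrel⟩⟩
    · exact ⟨hxy.symm, Or.inl h.symm⟩
    · exact ⟨hxy.symm, Or.inr ⟨hadj.symm, (M.symm hadj _ _).1 hrel⟩⟩
  loopless := ⟨fun x h => h.1 rfl⟩

/-- A set of vertices of the cover graph is independent. -/
def CoverIndep {G : SimpleGraph V} {L : V → Finset ℕ} (M : MatchingAssignment G L)
    (s : Set {p : V × ℕ // p.2 ∈ L p.1}) : Prop :=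
  ∀ ⦃x⦄, x ∈ s → ∀ ⦃y⦄, y ∈ s → ¬ (Cover M).Adj x y

/-- `G` has an `M_L`-colouring: an independent set of size `|V(G)|` in the cover graph. -/
def HasMLColoring [Fintype V] {G : SimpleGraph V} {L : V → Finset ℕ}
    (M : MatchingAssignment G L) : Prop :=
  ∃ s : Set {p : V × ℕ // p.2 ∈ L p.1}, CoverIndep M s ∧ Nat.card s = Fintype.card V

/-- `G` is DP-`k`-colourable. -/
def DPColorable [Fintype V] (G : SimpleGraph V) (k : ℕ) : Prop :=
  ∀ L : V → Finset ℕ, (∀ v, k ≤ (L v).card) →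
    ∀ M : MatchingAssignment G L, HasMLColoring M

/-- `φ0` is a pre-colouring of the cycle `C`: it picks a colour from the list of each
vertex of `C`, and the chosen pairs form an independent set in the cover graph. -/
def IsPrecoloring {G : SimpleGraph V} {L : V → Finset ℕ} (M : MatchingAssignment G L)
    {a : V} (C : G.Walk a a) (φ0 : V → ℕ) : Prop :=
  (∀ v ∈ C.support, φ0 v ∈ L v) ∧
  ∀ u ∈ C.support, ∀ v ∈ C.support, ∀ h : G.Adj u v, ¬ M.rel h (φ0 u) (φ0 v)

/-- The pre-colouring `φ0` of the cycle `C` extends to an `M_L`-colouring of `G`. -/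
def ExtendsTo [Fintype V] {G : SimpleGraph V} {L : V → Finset ℕ}
    (M : MatchingAssignment G L) {a : V} (C : G.Walk a a) (φ0 : V → ℕ) : Prop :=
  ∃ s : Set {p : V × ℕ // p.2 ∈ L p.1},
    CoverIndep M s ∧ Nat.card s = Fintype.card V ∧
    ∀ v ∈ C.support, ∃ p ∈ s, (p : V × ℕ) = (v, φ0 v)

/-- `G` is `k`-choosable. -/
def Choosable (G : SimpleGraph V) (k : ℕ) : Prop :=
  ∀ L : V → Finset ℕ, (∀ v, k ≤ (L v).card) →
    ∃ c : V → ℕ, (∀ v, c v ∈ L v) ∧ ∀ ⦃u v : V⦄, G.Adj u v → c u ≠ c v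

/-- A counterexample to the extension statement for planar graphs with no 4-cycle
adjacent to a 5-cycle, on the vertex set `Fin n`. -/
def IsCex1 (n : ℕ) (G : SimpleGraph (Fin n)) : Prop :=
  IsPlanar G ∧ NoAdjCycles G 4 5 ∧
  ∃ (a : Fin n) (C : G.Walk a a) (L : Fin n → Finset ℕ)
      (M : MatchingAssignment G L) (φ0 : Fin n → ℕ),
    C.IsCycle ∧ C.length ≤ 7 ∧ (∀ v, 4 ≤ (L v).card) ∧
    IsPrecoloring M C φ0 ∧ ¬ ExtendsTo M C φ0

/-- A counterexample to the extension statement for planar graphs with no 4-cycle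
adjacent to a 6-cycle, on the vertex set `Fin n`. -/
def IsCex2 (n : ℕ) (G : SimpleGraph (Fin n)) : Prop :=
  IsPlanar G ∧ NoAdjCycles G 4 6 ∧
  ∃ (a : Fin n) (C : G.Walk a a) (L : Fin n → Finset ℕ)
      (M : MatchingAssignment G L) (φ0 : Fin n → ℕ),
    C.IsCycle ∧ IsGoodCycle G C ∧ C.length ≤ 8 ∧ (∀ v, 4 ≤ (L v).card) ∧
    IsPrecoloring M C φ0 ∧ ¬ ExtendsTo M C φ0

/-- The graph obtained from `G - {v, v2, v4}` by identifying `v1` and `v3`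
(the merged vertex is `v1`; the vertices `v, v2, v4, v3` become isolated). -/
def identGraph (G : SimpleGraph V) (v v2 v4 v1 v3 : V) : SimpleGraph V :=
  SimpleGraph.fromRel fun x y =>
    x ∉ ({v, v2, v4} : Set V) ∧ y ∉ ({v, v2, v4} : Set V) ∧ x ≠ v3 ∧ y ≠ v3 ∧
      (G.Adj x y ∨ (x = v1 ∧ G.Adj v3 y) ∨ (y = v1 ∧ G.Adj x v3))

/-!
If `v` had at least `deg v - 1` incident triangular faces, then all but at most one of the
consecutive pairs of darts in the rotation at `v` would span a triangle. As `deg v ≥ 4`, some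
four consecutive neighbours `a₀, a₁, a₂, a₃` of `v` then form a fan `a₀a₁, a₁a₂, a₂a₃`
around `v`, and the 4-cycle `v a₁ a₂ a₃` shares the edge `a₁a₂` with the 5-cycle
`v a₀ a₁ a₂ a₃`.
-/

theorem Equiv.Perm.card_le_minimalPeriod_of_forall_sameCycle {α : Type*} [Finite α]
    {f : Equiv.Perm α} {x : α} {s : Finset α} (hs : ∀ y ∈ s, f.SameCycle x y) :
    s.card ≤ Function.minimalPeriod f x := by
  classical
  have hpos : 0 < Function.minimalPeriod f x :=
    Function.minimalPeriod_pos_of_mem_periodicPts (f.injective.mem_periodicPts x)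
  have hsub : s ⊆ (Finset.range (Function.minimalPeriod f x)).image (f^[·] x) := by
    intro y hy
    obtain ⟨i, -, rfl⟩ := (hs y hy).exists_pow_eq'
    refine Finset.mem_image.mpr ⟨i % Function.minimalPeriod f x,
      Finset.mem_range.mpr (Nat.mod_lt _ hpos), ?_⟩
    rw [Function.iterate_mod_minimalPeriod_eq, Equiv.Perm.coe_pow]
  exact (Finset.card_le_card hsub).trans (Finset.card_image_le.trans (by simp))

theorem Finset.exists_forall_ne_mem_of_card_le_card_add_one {α : Type*} [DecidableEq α]
    {s t : Finset α} (hts : t ⊆ s) (hs : s.Nonempty) (hcard : s.card ≤ t.card + 1) :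
    ∃ a ∈ s, ∀ b ∈ s, b ≠ a → b ∈ t := by
  have hsdiff : (s \ t).card ≤ 1 := by
    rw [Finset.card_sdiff_of_subset hts]
    omega
  by_cases hst : s ⊆ t
  · obtain ⟨a, ha⟩ := hs
    exact ⟨a, ha, fun b hb _ => hst hb⟩
  · obtain ⟨a, ha, hat⟩ := Finset.not_subset.mp hst
    refine ⟨a, ha, fun b hb hba => ?_⟩
    by_contra hbt
    exact hba (Finset.card_le_one.mp hsdiff b (by simp [hb, hbt]) a (by simp [ha, hat]))

namespace SimpleGraph

theorem gdeg_eq_card_filter_dart_fst [Fintype V] [DecidableEq V] (G : SimpleGraph V)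
    [DecidableRel G.Adj] (v : V) :
    gdeg G v = (Finset.univ.filter fun d : G.Dart => d.fst = v).card := by
  rw [gdeg, Nat.card_eq_fintype_card, card_neighborSet_eq_degree,
    dart_fst_fiber_card_eq_degree]

theorem not_noAdjCycles_four_five_of_fan {G : SimpleGraph V} {v a₀ a₁ a₂ a₃ : V}
    (hnodup : [v, a₀, a₁, a₂, a₃].Nodup) (h₀ : G.Adj v a₀) (h₁ : G.Adj v a₁)
    (h₃ : G.Adj v a₃) (h₀₁ : G.Adj a₀ a₁) (h₁₂ : G.Adj a₁ a₂) (h₂₃ : G.Adj a₂ a₃) :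
    ¬ NoAdjCycles G 4 5 := by
  let c₄ : G.Walk v v := .cons h₁ (.cons h₁₂ (.cons h₂₃ (.cons h₃.symm .nil)))
  let c₅ : G.Walk v v := .cons h₀ (.cons h₀₁ (.cons h₁₂ (.cons h₂₃ (.cons h₃.symm .nil))))
  have hc₄ : c₄.IsCycle := by
    simp_all [c₄, Walk.cons_isCycle_iff, Walk.cons_isPath_iff, eq_comm]
  have hc₅ : c₅.IsCycle := by
    simp_all [c₅, Walk.cons_isCycle_iff, Walk.cons_isPath_iff, eq_comm]
  exact fun h => h v v c₄ c₅ hc₄ hc₅ rfl rfl ⟨s(a₁, a₂), by simp [c₄], by simp [c₅]⟩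

end SimpleGraph

section RotationSystem

variable {G : SimpleGraph V} {rot : Equiv.Perm G.Dart}

theorem fst_facePerm (rot_fst : ∀ d : G.Dart, (rot d).fst = d.fst) (d : G.Dart) :
    (facePerm rot d).fst = d.snd :=
  rot_fst d.symm

theorem fst_iterate_rot (rot_fst : ∀ d : G.Dart, (rot d).fst = d.fst) (d : G.Dart) (k : ℕ) :
    ((⇑rot)^[k] d).fst = d.fst := by
  induction k with
  | zero => rfl
  | succ k ih => rw [Function.iterate_succ_apply', rot_fst, ih]

/-- The face of `rot d` is the triangle `v, (rot d).snd, d.snd`: its third dart is `d.symm`. -/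
theorem adj_snd_rot_of_minimalPeriod_facePerm_eq_three
    (rot_fst : ∀ d : G.Dart, (rot d).fst = d.fst) {d : G.Dart}
    (h : Function.minimalPeriod (facePerm rot) (rot d) = 3) :
    G.Adj (rot d).snd d.snd := by
  have hclosed : facePerm rot (facePerm rot (facePerm rot (rot d))) = rot d := by
    have := Function.iterate_minimalPeriod (f := facePerm rot) (x := rot d)
    rwa [h] at this
  have hlast : (facePerm rot (facePerm rot (rot d))).symm = d := rot.injective hclosed
  have hsnd : (facePerm rot (rot d)).snd = d.snd :=
    (fst_facePerm rot_fst _).symm.trans (congrArg (fun e : G.Dart => e.snd) hlast)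
  simpa only [fst_facePerm rot_fst, hsnd] using (facePerm rot (rot d)).adj

theorem not_noAdjCycles_four_five_of_three_triangles
    (rot_fst : ∀ d : G.Dart, (rot d).fst = d.fst) {d : G.Dart}
    (hperiod : 4 ≤ Function.minimalPeriod rot d)
    (htri : ∀ k, 1 ≤ k → k ≤ 3 → Function.minimalPeriod (facePerm rot) ((⇑rot)^[k] d) = 3) :
    ¬ NoAdjCycles G 4 5 := by
  set a : ℕ → V := fun k => ((⇑rot)^[k] d).snd
  have hadj : ∀ k, G.Adj d.fst (a k) := fun k => by
    simpa only [fst_iterate_rot rot_fst] using ((⇑rot)^[k] d).adj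
  have hstep : ∀ k < 3, G.Adj (a k) (a (k + 1)) := by
    intro k hk
    have hk₁ := htri (k + 1) (by omega) (by omega)
    rw [Function.iterate_succ_apply'] at hk₁
    simpa only [a, Function.iterate_succ_apply'] using
      (adj_snd_rot_of_minimalPeriod_facePerm_eq_three rot_fst hk₁).symm
  have hne : ∀ i < 4, ∀ j < 4, i ≠ j → a i ≠ a j := by
    intro i hi j hj hij hsnd
    refine hij <| (Function.iterate_eq_iterate_iff_of_lt_minimalPeriod
      (by omega) (by omega)).mp (Dart.ext _ _ (Prod.ext ?_ hsnd))
    simp only [fst_iterate_rot rot_fst]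
  have hnodup : [d.fst, a 0, a 1, a 2, a 3].Nodup := by
    simp [(hadj _).ne, hne]
  exact not_noAdjCycles_four_five_of_fan hnodup (hadj 0) (hadj 1) (hadj 3)
    (hstep 0 (by omega)) (hstep 1 (by omega)) (hstep 2 (by omega))

end RotationSystem

namespace PlaneEmbedding

variable [Fintype V] {G : SimpleGraph V} (E : PlaneEmbedding G)

theorem numTriFacesAt_le_card_filter [DecidableEq V] [DecidableRel G.Adj] (v : V) :
    E.numTriFacesAt v ≤
      (Finset.univ.filter fun d : G.Dart => d.fst = v ∧ E.faceLength d = 3).card := by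
  rw [← Nat.card_eq_finsetCard]
  refine Nat.card_le_card_of_surjective
    (fun d => ⟨Quotient.mk _ d.1, d.1, rfl, (Finset.mem_filter.mp d.2).2⟩) ?_
  rintro ⟨-, d, rfl, hd⟩
  exact ⟨⟨d, Finset.mem_filter.mpr ⟨Finset.mem_univ d, hd⟩⟩, rfl⟩

theorem gdeg_fst_le_minimalPeriod_rot (d : G.Dart) :
    gdeg G d.fst ≤ Function.minimalPeriod E.rot d := by
  classical
  rw [gdeg_eq_card_filter_dart_fst]
  exact Equiv.Perm.card_le_minimalPeriod_of_forall_sameCycle fun d' hd' =>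
    E.rot_cycle d d' (Finset.mem_filter.mp hd').2.symm

end PlaneEmbedding

open Finset in
/-- **Theorem (Statement 9).** In a plane graph with no 4-cycle adjacent to a 5-cycle,
every vertex of degree at least 4 is incident to at most `deg v - 2` faces of length 3. -/
theorem deg4_vertex_few_triangles_G1
    (V : Type) [Fintype V] (G : SimpleGraph V) (E : PlaneEmbedding G)
    (h45 : NoAdjCycles G 4 5) (v : V) (hv : 4 ≤ gdeg G v) :
    E.numTriFacesAt v ≤ gdeg G v - 2 := by
  classical
  set darts : Finset G.Dart := {d | d.fst = v}
  set triDarts : Finset G.Dart := {d | d.fst = v ∧ E.faceLength d = 3}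
  have hdeg : gdeg G v = #darts := G.gdeg_eq_card_filter_dart_fst v
  have hsub : triDarts ⊆ darts := fun d hd => mem_filter.mpr ⟨mem_univ d, (mem_filter.mp hd).2.1⟩
  have htri : E.numTriFacesAt v ≤ #triDarts := E.numTriFacesAt_le_card_filter v
  refine htri.trans (not_lt.mp fun hlt => absurd h45 ?_)
  obtain ⟨d, hd, hother⟩ := exists_forall_ne_mem_of_card_le_card_add_one hsub
    (card_pos.mp (by omega)) (by omega)
  have hd_fst : d.fst = v := (mem_filter.mp hd).2
  have hperiod : gdeg G v ≤ Function.minimalPeriod E.rot d :=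
    hd_fst ▸ E.gdeg_fst_le_minimalPeriod_rot d
  refine not_noAdjCycles_four_five_of_three_triangles E.rot_fst (d := d) (by omega)
    fun k hk₁ hk₃ => ?_
  have hne : (⇑E.rot)^[k] d ≠ d :=
    Function.not_isPeriodicPt_of_pos_of_lt_minimalPeriod (by omega) (by omega)
  exact (mem_filter.mp (hother _ (mem_filter.mpr ⟨mem_univ _,
    (fst_iterate_rot E.rot_fst d k).trans hd_fst⟩) hne)).2.2
end

section
/- Let G be a plane graph in which no 4-cycle is adjacent to a 6-cycle. Then every vertex v of G of degree at least 5 is incident to at most d_G(v)−2 faces of length 3. -/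
open SimpleGraph

universe u

variable {V : Type u}

/-!
Let `v` have degree at least 5. Every 3-face at `v` contains a dart leaving `v`, so if more than
`deg v - 2` such faces existed, at most one dart at `v` would lie on a face of length other than
3. The rotation at `v` is a single cycle of length `deg v ≥ 5`, so it then contains four
consecutive darts on 3-faces: consecutive neighbours `w₀, …, w₄` of `v` with `wᵢ ~ wᵢ₊₁`. Now
`v w₀ w₁ w₂` is a 4-cycle and `v w₀ w₁ w₂ w₃ w₄` a 6-cycle, and both contain the edge `v w₀`.
-/

namespace SimpleGraph

variable {G : SimpleGraph V}

theorem exists_isPath_of_chain (w : ℕ → V) (n : ℕ) (hw : Set.InjOn w (Set.Iic n))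
    (hadj : ∀ i < n, G.Adj (w (i + 1)) (w i)) :
    ∃ p : G.Walk (w n) (w 0), p.IsPath ∧ p.length = n ∧ ∀ x ∈ p.support, x ∈ w '' Set.Iic n := by
  induction n with
  | zero => exact ⟨Walk.nil, Walk.IsPath.nil, rfl, by simp⟩
  | succ n ih =>
    obtain ⟨p, hp, hlen, hsupp⟩ := ih (hw.mono (Set.Iic_subset_Iic.2 n.le_succ))
      fun i hi => hadj i (by omega)
    have hnew : w (n + 1) ∉ p.support := fun hmem => by
      obtain ⟨i, hi, heq⟩ := hsupp _ hmem
      rw [Set.mem_Iic] at hi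
      have := hw (Set.mem_Iic.2 (by omega)) (Set.mem_Iic.2 le_rfl) heq
      omega
    refine ⟨Walk.cons (hadj n n.lt_succ_self) p, hp.cons hnew, by simp [hlen], ?_⟩
    simp only [Walk.support_cons, List.mem_cons]
    rintro x (rfl | hx)
    · exact ⟨n + 1, Set.mem_Iic.2 le_rfl, rfl⟩
    · exact Set.image_mono (Set.Iic_subset_Iic.2 n.le_succ) (hsupp x hx)

theorem exists_isCycle_of_chain {v : V} (w : ℕ → V) {n : ℕ} (hn : 1 ≤ n)
    (hw : Set.InjOn w (Set.Iic n)) (hv : ∀ i ≤ n, w i ≠ v)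
    (hfirst : G.Adj (w 0) v) (hlast : G.Adj v (w n))
    (hadj : ∀ i < n, G.Adj (w (i + 1)) (w i)) :
    ∃ C : G.Walk v v, C.IsCycle ∧ C.length = n + 2 ∧ s(v, w 0) ∈ C.edges := by
  obtain ⟨p, hp, hlen, hsupp⟩ := exists_isPath_of_chain w n hw hadj
  have hvp : v ∉ p.support := fun hmem =>
    let ⟨i, hi, heq⟩ := hsupp v hmem
    hv i hi heq
  refine ⟨Walk.cons hlast (p.concat hfirst), ?_, by simp [hlen], by simp [Sym2.eq_swap]⟩
  refine (Walk.cons_isCycle_iff _ _).2 ⟨hp.concat hvp hfirst, ?_⟩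
  rw [Walk.edges_concat, List.concat_eq_append, List.mem_append, List.mem_singleton]
  rintro (hmem | hmem)
  · exact hvp (p.fst_mem_support_of_mem_edges hmem)
  · have hends : v = w 0 ∧ w n = v ∨ w n = w 0 := by simpa using hmem
    have := hw (Set.mem_Iic.2 le_rfl) (Set.mem_Iic.2 (Nat.zero_le n))
      (hends.resolve_left fun h => hv 0 (Nat.zero_le n) h.1.symm)
    omega

end SimpleGraph

open Finset

theorem Finset.exists_mem_forall_ne_of_card_filter_not_le_one {α : Type*} {s : Finset α}
    {q : α → Prop} [DecidablePred q] (hs : s.Nonempty) (h : #(s.filter fun a ↦ ¬ q a) ≤ 1) :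
    ∃ m ∈ s, ∀ x ∈ s, x ≠ m → q x := by
  by_cases hall : ∀ x ∈ s, q x
  · obtain ⟨m, hm⟩ := hs
    exact ⟨m, hm, fun x hx _ => hall x hx⟩
  · push Not at hall
    obtain ⟨m, hm, hqm⟩ := hall
    refine ⟨m, hm, fun x hx hxm => by_contra fun hqx => hxm ?_⟩
    exact card_le_one.1 h x (by simp [hx, hqx]) m (by simp [hm, hqm])

theorem card_dart_fst_eq_gdeg (G : SimpleGraph V) (v : V) :
    Nat.card {d : G.Dart // d.fst = v} = gdeg G v :=
  Nat.card_congr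
    { toFun d := ⟨d.1.snd, by simpa [d.2] using d.1.adj⟩
      invFun w := ⟨G.dartOfNeighborSet v w, rfl⟩
      left_inv d := Subtype.ext (SimpleGraph.Dart.ext _ _ (Prod.ext d.2.symm rfl))
      right_inv _ := rfl }

namespace PlaneEmbedding

variable [Fintype V] {G : SimpleGraph V} (E : PlaneEmbedding G)

theorem rot_pow_fst (n : ℕ) (d : G.Dart) : ((E.rot ^ n) d).fst = d.fst := by
  induction n with
  | zero => rfl
  | succ n ih => rw [pow_succ', Equiv.Perm.mul_apply, E.rot_fst, ih]

theorem facePerm_fst (d : G.Dart) : (facePerm E.rot d).fst = d.snd :=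
  E.rot_fst d.symm

theorem gdeg_le_of_rot_pow_apply_eq {d : G.Dart} {i : ℕ} (hi : 0 < i)
    (h : (E.rot ^ i) d = d) : gdeg G d.fst ≤ i := by
  classical
  have hper : Function.IsPeriodicPt E.rot i d := by
    rw [Function.IsPeriodicPt, Function.IsFixedPt, Equiv.Perm.iterate_eq_pow, h]
  have hsurj : Function.Surjective fun r : Fin i =>
      (⟨(E.rot ^ (r : ℕ)) d, E.rot_pow_fst r d⟩ : {d' : G.Dart // d'.fst = d.fst}) := by
    rintro ⟨d', hd'⟩
    obtain ⟨n, -, hn⟩ := (E.rot_cycle d d' hd'.symm).exists_pow_eq'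
    refine ⟨⟨n % i, Nat.mod_lt n hi⟩, Subtype.ext ?_⟩
    simp only [← Equiv.Perm.iterate_eq_pow, hper.iterate_mod_apply] at hn ⊢
    exact hn
  rw [← card_dart_fst_eq_gdeg]
  simpa using Nat.card_le_card_of_surjective _ hsurj

theorem rot_pow_injOn (d : G.Dart) :
    Set.InjOn (fun i : ℕ => (E.rot ^ i) d) (Set.Iio (gdeg G d.fst)) := by
  suffices ∀ i j, i < j → j < gdeg G d.fst → (E.rot ^ i) d ≠ (E.rot ^ j) d by
    intro i hi j hj heq
    rcases lt_trichotomy i j with hij | hij | hij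
    · exact absurd heq (this i j hij hj)
    · exact hij
    · exact absurd heq.symm (this j i hij hi)
  intro i j hij hj heq
  have hback : (E.rot ^ (j - i)) ((E.rot ^ i) d) = (E.rot ^ i) d := by
    rw [← Equiv.Perm.mul_apply, ← pow_add, Nat.sub_add_cancel hij.le, heq]
  have := E.gdeg_le_of_rot_pow_apply_eq (Nat.sub_pos_of_lt hij) hback
  rw [rot_pow_fst] at this
  omega

/-- The face through `E.rot d`, when a triangle, is `d.fst → (E.rot d).snd → d.snd`. -/
theorem adj_of_faceLength_rot_eq_three {d : G.Dart} (h : E.faceLength (E.rot d) = 3) :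
    G.Adj (E.rot d).snd d.snd := by
  set f := facePerm E.rot
  have hcycle : f^[3] (E.rot d) = E.rot d := h ▸ Function.iterate_minimalPeriod
  have hback : (f (f (E.rot d))).symm = d := E.rot.injective hcycle
  have hsnd : (f (E.rot d)).snd = d.snd :=
    (E.facePerm_fst _).symm.trans (congrArg (·.snd) hback)
  rw [← E.facePerm_fst, ← hsnd]
  exact (f (E.rot d)).adj

theorem exists_isCycle_of_faceLength_rot_pow_eq_three {d : G.Dart} {n : ℕ} (hn : 1 ≤ n)
    (hdeg : n < gdeg G d.fst) (htri : ∀ i < n, E.faceLength ((E.rot ^ (i + 1)) d) = 3) :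
    ∃ C : G.Walk d.fst d.fst, C.IsCycle ∧ C.length = n + 2 ∧ s(d.fst, d.snd) ∈ C.edges := by
  set w : ℕ → V := fun i => ((E.rot ^ i) d).snd
  have hspoke (i : ℕ) : G.Adj d.fst (w i) := E.rot_pow_fst i d ▸ ((E.rot ^ i) d).adj
  have hinj : Set.InjOn w (Set.Iic n) := fun i hi j hj heq =>
    E.rot_pow_injOn d ((Set.mem_Iic.1 hi).trans_lt hdeg) ((Set.mem_Iic.1 hj).trans_lt hdeg)
      (SimpleGraph.Dart.ext _ _ (Prod.ext (by simp [rot_pow_fst]) heq))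
  refine SimpleGraph.exists_isCycle_of_chain w hn hinj (fun i _ => (hspoke i).ne.symm)
    d.adj.symm (hspoke n) fun i _ => ?_
  have := E.adj_of_faceLength_rot_eq_three (d := (E.rot ^ i) d)
    (by rw [← Equiv.Perm.mul_apply, ← pow_succ']; exact htri i ‹_›)
  rwa [← Equiv.Perm.mul_apply, ← pow_succ'] at this

theorem not_forall_faceLength_rot_pow_eq_three (h46 : NoAdjCycles G 4 6) {d : G.Dart}
    (hdeg : 5 ≤ gdeg G d.fst) : ¬ ∀ i < 4, E.faceLength ((E.rot ^ (i + 1)) d) = 3 := by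
  intro htri
  obtain ⟨C4, hC4, hlen4, he4⟩ := E.exists_isCycle_of_faceLength_rot_pow_eq_three
    (n := 2) (by omega) (by omega) fun i hi => htri i (by omega)
  obtain ⟨C6, hC6, hlen6, he6⟩ := E.exists_isCycle_of_faceLength_rot_pow_eq_three
    (n := 4) (by omega) (by omega) htri
  exact h46 _ _ C4 C6 hC4 hC6 hlen4 hlen6 ⟨_, he4, he6⟩

theorem numTriFacesAt_le_card (v : V) :
    E.numTriFacesAt v ≤ Nat.card {d : G.Dart // d.fst = v ∧ E.faceLength d = 3} := by
  classical
  refine Nat.card_le_card_of_surjective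
    (fun d => ⟨Quotient.mk _ d.1, d.1, rfl, d.2⟩) ?_
  rintro ⟨f, d, rfl, hd⟩
  exact ⟨⟨d, hd⟩, rfl⟩

end PlaneEmbedding

/-- **Theorem (Statement 12).** In a plane graph with no 4-cycle adjacent to a 6-cycle,
every vertex of degree at least 5 is incident to at most `deg v - 2` faces of length 3. -/
theorem deg5_vertex_few_triangles_G2
    (V : Type) [Fintype V] (G : SimpleGraph V) (E : PlaneEmbedding G)
    (h46 : NoAdjCycles G 4 6) (v : V) (hv : 5 ≤ gdeg G v) :
    E.numTriFacesAt v ≤ gdeg G v - 2 := by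
  classical
  set S : Finset G.Dart := {d | d.fst = v}
  have hS : #S = gdeg G v := by
    rw [← card_dart_fst_eq_gdeg, Nat.card_eq_fintype_card, Fintype.card_subtype]
  have htri : E.numTriFacesAt v ≤ #(S.filter (E.faceLength · = 3)) := by
    rw [filter_filter, ← Fintype.card_subtype, ← Nat.card_eq_fintype_card]
    exact E.numTriFacesAt_le_card v
  by_contra! hlt
  have hsplit := S.card_filter_add_card_filter_not (E.faceLength · = 3)
  obtain ⟨m, hmS, hm⟩ := S.exists_mem_forall_ne_of_card_filter_not_le_one
    (q := (E.faceLength · = 3)) (card_pos.1 (by omega)) (by omega)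
  have hmv : m.fst = v := (mem_filter.1 hmS).2
  refine E.not_forall_faceLength_rot_pow_eq_three h46 (hmv ▸ hv) fun i hi => hm _ ?_ ?_
  · simp [S, E.rot_pow_fst, hmv]
  · exact fun h => i.succ_ne_zero <| E.rot_pow_injOn m (Set.mem_Iio.2 (by rw [hmv]; omega))
      (Set.mem_Iio.2 (by rw [hmv]; omega)) (by simpa using h)
end

section
/- Let G be a planar graph in which no 4-cycle is adjacent to a 5-cycle. Then every cycle of G of length at most 7 is good; that is, for every cycle C of length at most 7, no vertex of degree at least 4 in V(G)\V(C) has at least four neighbors on C. -/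
open SimpleGraph

universe u

variable {V : Type u}

/-!
Number the vertices of the cycle `C` by `ZMod n`, `n = |C| ≤ 7`. If a vertex `w` off `C` sees
four of them, a finite check shows that two of its neighbours lie at cyclic distance 2 and two
at cyclic distance 3, with one neighbour `y` common to both pairs. Closing the two arcs through
`w` gives a 4-cycle and a 5-cycle that share the edge `wy`.
-/

theorem ZMod.exists_shared_end_of_gap_two_and_gap_three {n : ℕ} (hn0 : 0 < n) (hn : n ≤ 7)
    (s : Finset (ZMod n)) (hs : 4 ≤ s.card) :
    ∃ y ∈ s, (∃ p ∈ s, p + 2 ∈ s ∧ (y = p ∨ y = p + 2)) ∧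
      (∃ q ∈ s, q + 3 ∈ s ∧ (y = q ∨ y = q + 3)) := by
  revert s
  set_option maxRecDepth 10000 in
  interval_cases n <;> decide

namespace SimpleGraph.Walk

variable {G : SimpleGraph V} {a : V}

def cycleVert (C : G.Walk a a) (i : ZMod C.length) : V := C.getVert i.val

theorem range_cycleVert (C : G.Walk a a) : Set.range C.cycleVert = {x | x ∈ C.support} := by
  ext x
  refine ⟨fun ⟨i, hi⟩ => hi ▸ C.getVert_mem_support _, fun hx => ?_⟩
  obtain ⟨m, rfl, hm⟩ := mem_support_iff_exists_getVert.mp hx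
  refine ⟨m, ?_⟩
  rw [cycleVert, ZMod.val_natCast]
  rcases hm.lt_or_eq with hm | rfl
  · rw [Nat.mod_eq_of_lt hm]
  · rw [Nat.mod_self, getVert_zero, getVert_length]

theorem IsCycle.cycleVert_injective {C : G.Walk a a} (hC : C.IsCycle) :
    Function.Injective C.cycleVert := by
  have : NeZero C.length := ⟨by have := hC.three_le_length; omega⟩
  intro i j hij
  have hi := ZMod.val_lt i
  have hj := ZMod.val_lt j
  refine ZMod.val_injective _ (hC.getVert_injOn' ?_ ?_ hij) <;>
    simp only [Set.mem_ofPred_eq] <;> omega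

theorem getVert_append_self (C : G.Walk a a) {j : ℕ} (hj : j < 2 * C.length) :
    (C.append C).getVert j = C.getVert (j % C.length) := by
  rw [getVert_append]
  split_ifs with h
  · rw [Nat.mod_eq_of_lt h]
  · rw [Nat.mod_eq_sub_mod (not_lt.mp h), Nat.mod_eq_of_lt (by omega)]

/-- The arc is cut out of the cycle traversed twice, so that it may pass the base point. -/
theorem IsCycle.exists_isPath_cycleVert_add {C : G.Walk a a} (hC : C.IsCycle)
    (i : ZMod C.length) {k : ℕ} (hk : k < C.length) :
    ∃ p : G.Walk (C.cycleVert i) (C.cycleVert (i + k)),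
      p.IsPath ∧ p.length = k ∧ ∀ x ∈ p.support, x ∈ C.support := by
  have : NeZero C.length := ⟨by omega⟩
  have hi := ZMod.val_lt i
  set q := ((C.append C).drop i.val).take k
  have hq : ∀ m ≤ k, q.getVert m = C.cycleVert (i + m) := by
    intro m hm
    rw [take_getVert, drop_getVert, min_eq_right hm, getVert_append_self _ (by omega),
      cycleVert, ZMod.val_add, ZMod.val_natCast, Nat.add_mod_mod]
  have hqlen : q.length = k := by simp only [q, take_length, drop_length, length_append]; omega
  refine ⟨q.copy (by simpa using hq 0 k.zero_le) (by simpa [q] using hq k le_rfl), ?_,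
    by simpa using hqlen, ?_⟩
  · rw [isPath_copy, ← IsPath.getVert_injOn_iff]
    intro m hm m' hm' h
    simp only [Set.mem_ofPred_eq, hqlen] at hm hm'
    rw [hq m hm, hq m' hm'] at h
    have := (ZMod.natCast_eq_natCast_iff' m m' _).mp
      (add_left_cancel (hC.cycleVert_injective h))
    rwa [Nat.mod_eq_of_lt (by omega), Nat.mod_eq_of_lt (by omega)] at this
  · intro x hx
    obtain ⟨m, rfl, hm⟩ := mem_support_iff_exists_getVert.mp (by simpa using hx)
    rw [hq m (hqlen ▸ hm)]
    exact C.getVert_mem_support _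

theorem IsPath.isCycle_cons_concat {s t w : V} {p : G.Walk s t} (hp : p.IsPath)
    (hne : ¬ p.Nil) (hw : w ∉ p.support) (hs : G.Adj w s) (ht : G.Adj t w) :
    (cons hs (p.concat ht)).IsCycle := by
  refine (cons_isCycle_iff _ hs).mpr ⟨hp.concat hw ht, fun h => ?_⟩
  simp only [edges_concat, List.concat_eq_append, List.mem_append, List.mem_singleton] at h
  rcases h with h | h
  · exact hw (p.fst_mem_support_of_mem_edges h)
  · rcases Sym2.eq_iff.mp h with ⟨rfl, -⟩ | ⟨-, rfl⟩
    · exact hw p.end_mem_support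
    · exact hne (hp.nil_iff_eq.mpr rfl)

theorem IsCycle.exists_isCycle_of_adj_cycleVert {C : G.Walk a a} (hC : C.IsCycle) {w : V}
    (hw : w ∉ C.support) (i : ZMod C.length) {k : ℕ} (hk0 : 0 < k) (hk : k < C.length)
    (hi : G.Adj w (C.cycleVert i)) (hik : G.Adj w (C.cycleVert (i + k))) :
    ∃ c : G.Walk w w, c.IsCycle ∧ c.length = k + 2 ∧
      s(w, C.cycleVert i) ∈ c.edges ∧ s(w, C.cycleVert (i + k)) ∈ c.edges := by
  obtain ⟨p, hp, hlen, hsupp⟩ := hC.exists_isPath_cycleVert_add i hk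
  refine ⟨cons hi (p.concat hik.symm), hp.isCycle_cons_concat ?_ (fun h => hw (hsupp w h)) _ _,
    by simp [hlen], by simp, by simp [Sym2.eq_swap]⟩
  rw [← length_eq_zero_iff]
  omega

end SimpleGraph.Walk

theorem cycles_le7_good_G1_general
    (V : Type) (G : SimpleGraph V)
    (h45 : NoAdjCycles G 4 5) :
    ∀ (a : V) (C : G.Walk a a), C.IsCycle → C.length ≤ 7 → IsGoodCycle G C := by
  classical
  rintro a C hC hlen ⟨w, hw, -, hcard⟩
  have : NeZero C.length := ⟨by have := hC.three_le_length; omega⟩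
  have hnbrs : {u | u ∈ C.support ∧ G.Adj w u} =
      C.cycleVert '' (C.cycleVert ⁻¹' G.neighborSet w) := by
    rw [Set.image_preimage_eq_range_inter, C.range_cycleVert]
    rfl
  rw [hnbrs, Nat.card_image_of_injective hC.cycleVert_injective, Nat.card_eq_card_toFinset]
    at hcard
  have h4 : 4 ≤ C.length := hcard.trans ((Finset.card_le_univ _).trans (ZMod.card _).le)
  obtain ⟨y, -, ⟨p, hp, hp2, hyp⟩, ⟨q, hq, hq3, hyq⟩⟩ :=
    ZMod.exists_shared_end_of_gap_two_and_gap_three (by omega) hlen _ hcard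
  simp only [Set.mem_toFinset, Set.mem_preimage, mem_neighborSet] at hp hp2 hq hq3
  obtain ⟨c4, hc4, hlen4, hp4, hp4'⟩ :=
    hC.exists_isCycle_of_adj_cycleVert hw p (k := 2) two_pos (by omega) hp (by exact_mod_cast hp2)
  obtain ⟨c5, hc5, hlen5, hq5, hq5'⟩ :=
    hC.exists_isCycle_of_adj_cycleVert hw q (k := 3) three_pos (by omega) hq (by exact_mod_cast hq3)
  refine h45 w w c4 c5 hc4 hc5 hlen4 hlen5 ⟨s(w, C.cycleVert y), ?_, ?_⟩
  · rcases hyp with rfl | rfl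
    exacts [hp4, by exact_mod_cast hp4']
  · rcases hyq with rfl | rfl
    exacts [hq5, by exact_mod_cast hq5']

/-- **Theorem (Statement 13).** In a planar graph with no 4-cycle adjacent to a 5-cycle,
every cycle of length at most 7 is good: no vertex of degree at least 4 outside the
cycle has at least four neighbours on it. -/
theorem cycles_le7_good_G1
    (V : Type) [Fintype V] (G : SimpleGraph V)
    (hplanar : IsPlanar G) (h45 : NoAdjCycles G 4 5) :
    ∀ (a : V) (C : G.Walk a a), C.IsCycle → C.length ≤ 7 → IsGoodCycle G C :=
  cycles_le7_good_G1_general V G h45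
end
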